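/- Let Ω ⊆ ℝ^n×ℝ^m be an open set of finite measure and let x ∈ ℝ^n×ℝ^m satisfy M_s(χ_Ω̄)(x) < 1/4. Then there is no pair of dyadic rectangles S = I_S×J_S and R = I_R×J_R such that x ∈ S, R ⊆ Ω, ℓ(I_R) ≥ ℓ(I_S), ℓ(J_R) ≥ ℓ(J_S), and 2R ∩ 2S ≠ ∅ (where 2R, 2S are the concentric double dilates). Equivalently, for such x, any dyadic rectangle R ⊆ Ω whose double meets the double of a dyadic rectangle S containing x must satisfy ℓ(I_R) < ℓ(I_S) or ℓ(J_R) < ℓ(J_S). -/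

import Mathlib

open MeasureTheory Filter
open scoped ENNReal NNReal BigOperators

noncomputable section

/-- Points of `ℝ^n × ℝ^m`. -/
abbrev Pt (n m : ℕ) := (Fin n → ℝ) × (Fin m → ℝ)

/-- An open cube in `ℝ^d` with center `c` and half side length `r`. -/
def openCube {d : ℕ} (c : Fin d → ℝ) (r : ℝ) : Set (Fin d → ℝ) :=
  {x | ∀ i, |x i - c i| < r}

/-- The strong maximal function on `ℝ^n × ℝ^m`: the supremum of averages of `|f|`
over products of open cubes `Q₁ × Q₂` containing the point. -/
def Ms {n m : ℕ} (f : Pt n m → ℝ) (x : Pt n m) : ℝ≥0∞ :=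
  ⨆ (c₁ : Fin n → ℝ) (r₁ : ℝ) (c₂ : Fin m → ℝ) (r₂ : ℝ)
    (_ : 0 < r₁) (_ : 0 < r₂) (_ : x ∈ openCube c₁ r₁ ×ˢ openCube c₂ r₂),
    (volume (openCube c₁ r₁ ×ˢ openCube c₂ r₂))⁻¹ *
      ∫⁻ y in openCube c₁ r₁ ×ˢ openCube c₂ r₂, ‖f y‖₊
/-- A dyadic rectangle `R = I × J ⊆ ℝ^n × ℝ^m`, where `I` is the dyadic cube of
side length `2^j` at position `a` and `J` the dyadic cube of side length `2^k`
at position `b`. -/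
structure DRect (n m : ℕ) where
  j : ℤ
  a : Fin n → ℤ
  k : ℤ
  b : Fin m → ℤ

/-- The dyadic cube of side length `2^j` at position `a`. -/
def dyadicCube {d : ℕ} (j : ℤ) (a : Fin d → ℤ) : Set (Fin d → ℝ) :=
  {x | ∀ i, (a i : ℝ) * 2 ^ j ≤ x i ∧ x i < ((a i : ℝ) + 1) * 2 ^ j}

/-- The center of the dyadic cube of side length `2^j` at position `a`. -/
def cubeCenter {d : ℕ} (j : ℤ) (a : Fin d → ℤ) : Fin d → ℝ :=
  fun i => ((a i : ℝ) + 1 / 2) * 2 ^ j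

/-- The concentric dilate, by a factor `lam`, of the dyadic cube of side length `2^j`
at position `a`. -/
def dilCube {d : ℕ} (lam : ℝ) (j : ℤ) (a : Fin d → ℤ) : Set (Fin d → ℝ) :=
  {x | ∀ i, |x i - cubeCenter j a i| ≤ lam * 2 ^ j / 2}

/-- The subset of `ℝ^n × ℝ^m` determined by a dyadic rectangle. -/
def DRect.set {n m : ℕ} (R : DRect n m) : Set (Pt n m) :=
  dyadicCube R.j R.a ×ˢ dyadicCube R.k R.b

/-- The concentric dilate `lam • R` of a dyadic rectangle. -/
def DRect.dil {n m : ℕ} (lam : ℝ) (R : DRect n m) : Set (Pt n m) :=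
  dilCube lam R.j R.a ×ˢ dilCube lam R.k R.b

/-- `Ω̄`: the union of `6R` over all dyadic rectangles `R ⊆ Ω`. -/
def coverSet {n m : ℕ} (Ω : Set (Pt n m)) : Set (Pt n m) :=
  ⋃ (R : DRect n m) (_ : R.set ⊆ Ω), DRect.dil 6 R

/-!
The double of `S` meets the double of `R`, and `S` is no larger than `R` in either factor,
so each coordinate of `x ∈ S` lies within `5/2` side lengths of the corresponding factor
of `R` from its centre. Hence `x` lies in the open interior of `6R`, which is contained in
`Ω̄`; averaging `χ_Ω̄` over that interior gives `M_s(χ_Ω̄)(x) ≥ 1`.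
-/

section Cubes

variable {d : ℕ}

lemma openCube_eq_ball (c : Fin d → ℝ) {r : ℝ} (hr : 0 < r) :
    openCube c r = Metric.ball c r := by
  ext x
  simp [openCube, ball_pi c hr, Real.dist_eq]

lemma dyadicCube_subset_dilCube_one (j : ℤ) (a : Fin d → ℤ) :
    dyadicCube j a ⊆ dilCube 1 j a := by
  intro x hx i
  obtain ⟨hlo, hhi⟩ := hx i
  simp only [cubeCenter, abs_le]
  constructor <;> linarith

lemma openCube_cubeCenter_subset_dilCube (lam : ℝ) (j : ℤ) (a : Fin d → ℤ) :
    openCube (cubeCenter j a) (lam * 2 ^ j / 2) ⊆ dilCube lam j a :=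
  fun _ hx i => (hx i).le

lemma mem_openCube_of_dilCube_two_inter {j j' : ℤ} {a a' : Fin d → ℤ} {x z : Fin d → ℝ}
    (hj : j' ≤ j) (hx : x ∈ dilCube 1 j' a') (hz' : z ∈ dilCube 2 j' a')
    (hz : z ∈ dilCube 2 j a) :
    x ∈ openCube (cubeCenter j a) (6 * 2 ^ j / 2) := by
  intro i
  have hpow : (2 : ℝ) ^ j' ≤ 2 ^ j := zpow_le_zpow_right₀ one_le_two hj
  have hpos : (0 : ℝ) < 2 ^ j := by positivity
  have htri : |x i - cubeCenter j a i| ≤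
      |x i - cubeCenter j' a' i| + |z i - cubeCenter j' a' i| + |z i - cubeCenter j a i| := by
    calc |x i - cubeCenter j a i|
        ≤ |x i - z i| + |z i - cubeCenter j a i| := abs_sub_le _ _ _
      _ ≤ |x i - cubeCenter j' a' i| + |z i - cubeCenter j' a' i| +
            |z i - cubeCenter j a i| := by
          gcongr
          exact (abs_sub_le _ _ _).trans_eq (by rw [abs_sub_comm (cubeCenter j' a' i)])
  linarith [hx i, hz' i, hz i]

end Cubes

lemma DRect.dil_six_subset_coverSet {n m : ℕ} {Ω : Set (Pt n m)} {R : DRect n m}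
    (hR : R.set ⊆ Ω) : R.dil 6 ⊆ coverSet Ω :=
  Set.subset_biUnion_of_mem (u := fun R : DRect n m => R.dil 6) hR

lemma one_le_Ms_indicator {n m : ℕ} {s : Set (Pt n m)} {x : Pt n m}
    {c₁ : Fin n → ℝ} {c₂ : Fin m → ℝ} {r₁ r₂ : ℝ} (hr₁ : 0 < r₁) (hr₂ : 0 < r₂)
    (hx : x ∈ openCube c₁ r₁ ×ˢ openCube c₂ r₂) (hs : openCube c₁ r₁ ×ˢ openCube c₂ r₂ ⊆ s) :
    1 ≤ Ms (s.indicator fun _ => (1 : ℝ)) x := by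
  set Q := openCube c₁ r₁ ×ˢ openCube c₂ r₂ with hQdef
  have hQ : Q = Metric.ball c₁ r₁ ×ˢ Metric.ball c₂ r₂ := by
    rw [hQdef, openCube_eq_ball c₁ hr₁, openCube_eq_ball c₂ hr₂]
  have hQopen : IsOpen Q := hQ ▸ Metric.isOpen_ball.prod Metric.isOpen_ball
  have hQpos : volume Q ≠ 0 := (hQopen.measure_pos volume ⟨x, hx⟩).ne'
  have hQfin : volume Q ≠ ⊤ :=
    (hQ ▸ Metric.isBounded_ball.prod Metric.isBounded_ball :
      Bornology.IsBounded Q).measure_lt_top.ne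
  have hint : ∫⁻ y in Q, ‖s.indicator (fun _ => (1 : ℝ)) y‖₊ = volume Q := by
    rw [setLIntegral_congr_fun (g := fun _ => 1) hQopen.measurableSet
      (fun y hy => by simp [Set.indicator_of_mem (hs hy)]), setLIntegral_one]
  calc (1 : ℝ≥0∞) = (volume Q)⁻¹ * ∫⁻ y in Q, ‖s.indicator (fun _ => (1 : ℝ)) y‖₊ := by
        rw [hint, ENNReal.inv_mul_cancel hQpos hQfin]
    _ ≤ Ms (s.indicator fun _ => (1 : ℝ)) x :=
        le_iSup₂_of_le c₁ r₁ <| le_iSup₂_of_le c₂ r₂ <| le_iSup₂_of_le hr₁ hr₂ <|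
          le_iSup_of_le hx le_rfl

theorem no_large_rectangle_general {n m : ℕ} (Ω : Set (Pt n m)) (x : Pt n m)
    (hx : Ms ((coverSet Ω).indicator fun _ => (1 : ℝ)) x < (1 / 4 : ℝ≥0∞)) :
    ¬ ∃ S R : DRect n m, x ∈ S.set ∧ R.set ⊆ Ω ∧
        S.j ≤ R.j ∧ S.k ≤ R.k ∧ (DRect.dil 2 R ∩ DRect.dil 2 S).Nonempty := by
  rintro ⟨S, R, ⟨hxI, hxJ⟩, hRΩ, hj, hk, z, ⟨hzIR, hzJR⟩, ⟨hzIS, hzJS⟩⟩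
  have hxQ : x ∈ openCube (cubeCenter R.j R.a) (6 * 2 ^ R.j / 2) ×ˢ
      openCube (cubeCenter R.k R.b) (6 * 2 ^ R.k / 2) :=
    ⟨mem_openCube_of_dilCube_two_inter hj (dyadicCube_subset_dilCube_one _ _ hxI) hzIS hzIR,
      mem_openCube_of_dilCube_two_inter hk (dyadicCube_subset_dilCube_one _ _ hxJ) hzJS hzJR⟩
  have hQ : openCube (cubeCenter R.j R.a) (6 * 2 ^ R.j / 2) ×ˢ
      openCube (cubeCenter R.k R.b) (6 * 2 ^ R.k / 2) ⊆ coverSet Ω :=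
    (Set.prod_mono (openCube_cubeCenter_subset_dilCube 6 _ _)
      (openCube_cubeCenter_subset_dilCube 6 _ _)).trans (DRect.dil_six_subset_coverSet hRΩ)
  have hMs := one_le_Ms_indicator (by positivity) (by positivity) hxQ hQ
  exact hMs.not_gt (hx.trans_le (by norm_num))

/-- If `M_s(χ_Ω̄)(x) < 1/4`, then there is no pair of dyadic rectangles
`S ∋ x` and `R ⊆ Ω` with `ℓ(I_R) ≥ ℓ(I_S)`, `ℓ(J_R) ≥ ℓ(J_S)` and `2R ∩ 2S ≠ ∅`. -/
theorem no_large_rectangle {n m : ℕ} (hn : 1 ≤ n) (hm : 1 ≤ m) (Ω : Set (Pt n m))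
    (hΩ : IsOpen Ω) (hΩfin : volume Ω < ⊤) (x : Pt n m)
    (hx : Ms ((coverSet Ω).indicator fun _ => (1 : ℝ)) x < (1 / 4 : ℝ≥0∞)) :
    ¬ ∃ S R : DRect n m, x ∈ S.set ∧ R.set ⊆ Ω ∧
        S.j ≤ R.j ∧ S.k ≤ R.k ∧ (DRect.dil 2 R ∩ DRect.dil 2 S).Nonempty :=
  no_large_rectangle_general Ω x hx
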